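/- arXiv:1905.08455 — 4 statements merged into one kernel-verified Lean document; each statement's English description precedes it below -/
import Mathlib

section
/- Let F be a set, D a filter on F, and for each f ∈ F let B_f be a type, E¹_f an equivalence relation on B_f, E²_f an equivalence relation on the power set of B_f, and M_f : B_f → Set B_f → Prop a relation satisfying the congruence law: for all b, b' ∈ B_f and S, S' ⊆ B_f, if E¹_f b b' and E²_f S S' then (M_f b S ↔ M_f b' S'). On X := ∏_{f∈F} B_f define p ≈ q ⟺ {f | E¹_f (p f) (q f)} ∈ D; on subsets of X define P ≈₂ Q ⟺ {f | E²_f (P⟨f⟩) (Q⟨f⟩)} ∈ D, where P⟨f⟩ := {p f | p ∈ P}; and define p ∊ P ⟺ {f | M_f (p f) (P⟨f⟩)} ∈ D. Then the lifted congruence law holds: for all p, p' ∈ X and P, P' ⊆ X, if p ≈ p' and P ≈₂ P' then (p ∊ P ↔ p' ∊ P'). -/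
/-- The lifted change-of-equals law (E4) in the infra-D-product. -/
theorem lifted_change_of_equals
    {F : Type*} (D : Filter F) (B : F → Type*)
    (E1 : ∀ f, B f → B f → Prop) (E2 : ∀ f, Set (B f) → Set (B f) → Prop)
    (M : ∀ f, B f → Set (B f) → Prop)
    (hE1 : ∀ f, Equivalence (E1 f)) (hE2 : ∀ f, Equivalence (E2 f))
    (hcong : ∀ (f : F) (b b' : B f) (S S' : Set (B f)),
      E1 f b b' → E2 f S S' → (M f b S ↔ M f b' S'))
    (p p' : ∀ f, B f) (P P' : Set (∀ f, B f))
    (hp : {f | E1 f (p f) (p' f)} ∈ D)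
    (hP : {f | E2 f ((fun q => q f) '' P) ((fun q => q f) '' P')} ∈ D) :
    ({f | M f (p f) ((fun q => q f) '' P)} ∈ D ↔
      {f | M f (p' f) ((fun q => q f) '' P')} ∈ D) := by
  constructor
  · intro h
    filter_upwards [hp, hP, h] with f h1 h2 h3
    exact (hcong f _ _ _ _ h1 h2).mp h3
  · intro h
    filter_upwards [hp, hP, h] with f h1 h2 h3
    exact (hcong f _ _ _ _ h1 h2).mpr h3
end

section
/- Let F be a nonempty set and D an ultrafilter on F. For x, y : F → ℝ define x ≤_D y ⟺ {f ∈ F | x f ≤ y f} ∈ D; for P ⊆ (F → ℝ) and f ∈ F set P⟨f⟩ := {p f | p ∈ P} ⊆ ℝ, and define x ∊_D P ⟺ {f ∈ F | x f ∈ P⟨f⟩} ∈ D. Suppose U, V ⊆ (F → ℝ) satisfy: (a) there exists x with x ∊_D U; (b) there exists y with y ∊_D V; (c) for every z : F → ℝ, z ∊_D U or z ∊_D V; (d) for all x, y, if x ∊_D U and y ∊_D V then x ≤_D y. Then there exists z : F → ℝ such that for all x, y, if x ∊_D U and y ∊_D V then x ≤_D z and z ≤_D y. -/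
/-- Existence of Dedekind cuts (axiom A22) in the infra-D-power ℝ^F. -/
theorem infrapower_dedekind_cut
    {F : Type*} [Nonempty F] (D : Ultrafilter F)
    (U V : Set (F → ℝ))
    (ha : ∃ x : F → ℝ, {f | x f ∈ (fun p : F → ℝ => p f) '' U} ∈ D)
    (hb : ∃ y : F → ℝ, {f | y f ∈ (fun p : F → ℝ => p f) '' V} ∈ D)
    (hc : ∀ z : F → ℝ, {f | z f ∈ (fun p : F → ℝ => p f) '' U} ∈ D ∨
      {f | z f ∈ (fun p : F → ℝ => p f) '' V} ∈ D)
    (hd : ∀ x y : F → ℝ, {f | x f ∈ (fun p : F → ℝ => p f) '' U} ∈ D →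
      {f | y f ∈ (fun p : F → ℝ => p f) '' V} ∈ D → {f | x f ≤ y f} ∈ D) :
    ∃ z : F → ℝ, ∀ x y : F → ℝ,
      {f | x f ∈ (fun p : F → ℝ => p f) '' U} ∈ D →
      {f | y f ∈ (fun p : F → ℝ => p f) '' V} ∈ D →
      {f | x f ≤ z f} ∈ D ∧ {f | z f ≤ y f} ∈ D := by
  classical
  obtain ⟨x0, hx0⟩ := ha
  obtain ⟨y0, hy0⟩ := hb
  set Uf : F → Set ℝ := fun f => (fun p : F → ℝ => p f) '' U with hUf
  -- a choice function: given w : F → ℝ, pick an element of Uf f above w f if any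
  have key : ∀ w : F → ℝ, {f | w f ∈ (fun p : F → ℝ => p f) '' V} ∈ D →
      {f | ∀ u ∈ Uf f, u ≤ w f} ∈ D := by
    intro w hw
    set x' : F → ℝ := fun f =>
      if h : ∃ u ∈ Uf f, w f < u then h.choose else x0 f with hx'
    have hx'U : {f | x' f ∈ (fun p : F → ℝ => p f) '' U} ∈ D := by
      refine D.toFilter.mem_of_superset hx0 ?_
      intro f hf
      simp only [Set.mem_setOf_eq, hx'] at *
      by_cases h : ∃ u ∈ Uf f, w f < u
      · rw [dif_pos h]; exact h.choose_spec.1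
      · simpa [h] using hf
    have hle := hd x' w hx'U hw
    refine D.toFilter.mem_of_superset hle ?_
    intro f hf u hu
    simp only [Set.mem_setOf_eq] at hf ⊢
    by_contra hlt
    push_neg at hlt
    have h : ∃ u ∈ Uf f, w f < u := ⟨u, hu, hlt⟩
    have : x' f = h.choose := by simp [hx', h]
    have := h.choose_spec.2
    rw [hx'] at hf
    simp only [h, dif_pos] at hf
    exact absurd (lt_of_lt_of_le this hf) (lt_irrefl _)
  have hA : {f | (Uf f).Nonempty ∧ BddAbove (Uf f)} ∈ D := by
    have := key y0 hy0
    refine D.toFilter.mem_of_superset (D.toFilter.inter_mem hx0 this) ?_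
    rintro f ⟨hf1, hf2⟩
    exact ⟨⟨x0 f, hf1⟩, ⟨y0 f, fun u hu => hf2 u hu⟩⟩
  refine ⟨fun f => if h : (Uf f).Nonempty ∧ BddAbove (Uf f) then sSup (Uf f) else 0,
    fun x y hx hy => ?_⟩
  constructor
  · refine D.toFilter.mem_of_superset (D.toFilter.inter_mem hx hA) ?_
    rintro f ⟨hf1, hf2⟩
    simp only [Set.mem_setOf_eq] at hf1 hf2 ⊢
    rw [dif_pos hf2]
    exact le_csSup hf2.2 hf1
  · have hub := key y hy
    refine D.toFilter.mem_of_superset (D.toFilter.inter_mem hub hA) ?_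
    rintro f ⟨hf1, hf2⟩
    simp only [Set.mem_setOf_eq] at hf1 hf2 ⊢
    rw [dif_pos hf2]
    exact csSup_le hf2.1 hf1
end

section
/- Let F be a nonempty set and D an ultrafilter on F. For P ⊆ (F → ℝ) and f ∈ F set P⟨f⟩ := {p f | p ∈ P} ⊆ ℝ; for x : F → ℝ define x ∊_D P ⟺ {f ∈ F | x f ∈ P⟨f⟩} ∈ D, and for P, Q ⊆ (F → ℝ) define P ≈_D Q ⟺ {f ∈ F | P⟨f⟩ = Q⟨f⟩} ∈ D. Then for all P, Q ⊆ (F → ℝ): P ≈_D Q if and only if for every x : F → ℝ, (x ∊_D P ↔ x ∊_D Q). -/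
/-- Extensionality axiom PE1 in the infra-D-power ℝ^F: the generalized
second-order equality of subsets holds iff they have the same generalized members. -/
theorem infrapower_extensionality_PE1
    {F : Type*} [Nonempty F] (D : Ultrafilter F) (P Q : Set (F → ℝ)) :
    ({f | (fun p : F → ℝ => p f) '' P = (fun p : F → ℝ => p f) '' Q} ∈ D) ↔
    ∀ x : F → ℝ, ({f | x f ∈ (fun p : F → ℝ => p f) '' P} ∈ D ↔
      {f | x f ∈ (fun p : F → ℝ => p f) '' Q} ∈ D) := by
  constructor
  · intro hE x
    constructor
    · intro h
      exact D.toFilter.mp_mem h (Filter.mem_of_superset hE (by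
        intro f hf hx
        simp only [Set.mem_setOf_eq] at *
        rw [← hf]; exact hx))
    · intro h
      exact D.toFilter.mp_mem h (Filter.mem_of_superset hE (by
        intro f hf hx
        simp only [Set.mem_setOf_eq] at *
        rw [hf]; exact hx))
  · intro hx
    by_contra hE
    rw [← Ultrafilter.compl_mem_iff_notMem] at hE
    set S₁ : Set F := {f | ∃ r, r ∈ (fun p : F → ℝ => p f) '' P ∧
      r ∉ (fun p : F → ℝ => p f) '' Q} with hS₁
    set S₂ : Set F := {f | ∃ r, r ∈ (fun p : F → ℝ => p f) '' Q ∧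
      r ∉ (fun p : F → ℝ => p f) '' P} with hS₂
    have hunion : S₁ ∪ S₂ ∈ D := by
      refine Filter.mem_of_superset hE ?_
      intro f hf
      simp only [Set.mem_compl_iff, Set.mem_setOf_eq] at hf
      by_cases hsub : (fun p : F → ℝ => p f) '' P ⊆ (fun p : F → ℝ => p f) '' Q
      · have : ¬ (fun p : F → ℝ => p f) '' Q ⊆ (fun p : F → ℝ => p f) '' P := by
          intro h; exact hf (Set.Subset.antisymm hsub h)
        rcases Set.not_subset.mp this with ⟨r, hrQ, hrP⟩
        exact Or.inr ⟨r, hrQ, hrP⟩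
      · rcases Set.not_subset.mp hsub with ⟨r, hrP, hrQ⟩
        exact Or.inl ⟨r, hrP, hrQ⟩
    -- WLOG-style: handle each case
    have key : ∀ (A B : Set (F → ℝ)), (∀ x : F → ℝ,
        ({f | x f ∈ (fun p : F → ℝ => p f) '' A} ∈ D ↔
         {f | x f ∈ (fun p : F → ℝ => p f) '' B} ∈ D)) →
        {f | ∃ r, r ∈ (fun p : F → ℝ => p f) '' A ∧
          r ∉ (fun p : F → ℝ => p f) '' B} ∈ D → False := by
      intro A B hAB hS
      classical
      choose! r hr using fun f (h : ∃ r, r ∈ (fun p : F → ℝ => p f) '' A ∧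
        r ∉ (fun p : F → ℝ => p f) '' B) => h
      set x : F → ℝ := fun f => if h : ∃ r, r ∈ (fun p : F → ℝ => p f) '' A ∧
        r ∉ (fun p : F → ℝ => p f) '' B then r f else 0 with hxdef
      have hA : {f | x f ∈ (fun p : F → ℝ => p f) '' A} ∈ D := by
        refine Filter.mem_of_superset hS ?_
        intro f hf
        simp only [Set.mem_setOf_eq] at hf ⊢
        simp only [hxdef, dif_pos hf]
        exact (hr f hf).1
      have hB := (hAB x).mp hA
      have : {f | x f ∈ (fun p : F → ℝ => p f) '' B} ∩ {f | ∃ r,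
          r ∈ (fun p : F → ℝ => p f) '' A ∧ r ∉ (fun p : F → ℝ => p f) '' B} ∈ D :=
        Filter.inter_mem hB hS
      rcases D.toFilter.nonempty_of_mem this with ⟨f, hfB, hfS⟩
      simp only [Set.mem_setOf_eq, hxdef] at hfB
      have hfS' : ∃ r, r ∈ (fun p : F → ℝ => p f) '' A ∧
          r ∉ (fun p : F → ℝ => p f) '' B := hfS
      rw [dif_pos hfS'] at hfB
      exact (hr f hfS').2 hfB
    rcases (Ultrafilter.union_mem_iff (f := D)).mp hunion with h1 | h2
    · exact key P Q hx h1
    · exact key Q P (fun x => (hx x).symm) h2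
end

section
/- Let F be a nonempty set and D an ultrafilter on F. For P ⊆ (F → ℝ) × (F → ℝ) and f ∈ F set P⟨f⟩ := {(x f, y f) | (x, y) ∈ P} ⊆ ℝ × ℝ; for x, y : F → ℝ define (x, y) ∊_D P ⟺ {f ∈ F | (x f, y f) ∈ P⟨f⟩} ∈ D, and for P, Q ⊆ (F → ℝ) × (F → ℝ) define P ≈_D Q ⟺ {f ∈ F | P⟨f⟩ = Q⟨f⟩} ∈ D. Then for all such P, Q: P ≈_D Q if and only if for all x, y : F → ℝ, ((x, y) ∊_D P ↔ (x, y) ∊_D Q). -/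
/-- Extensionality axiom PE2 for binary relations in the
infra-D-power ℝ^F. -/
theorem infrapower_extensionality_PE2
    {F : Type*} [Nonempty F] (D : Ultrafilter F)
    (P Q : Set ((F → ℝ) × (F → ℝ))) :
    ({f | (fun tp : (F → ℝ) × (F → ℝ) => (tp.1 f, tp.2 f)) '' P =
        (fun tp : (F → ℝ) × (F → ℝ) => (tp.1 f, tp.2 f)) '' Q} ∈ D) ↔
    ∀ x y : F → ℝ,
      ({f | (x f, y f) ∈ (fun tp : (F → ℝ) × (F → ℝ) => (tp.1 f, tp.2 f)) '' P} ∈ D ↔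
       {f | (x f, y f) ∈ (fun tp : (F → ℝ) × (F → ℝ) => (tp.1 f, tp.2 f)) '' Q} ∈ D) := by
  classical
  set Pf : F → Set (ℝ × ℝ) :=
    fun f => (fun tp : (F → ℝ) × (F → ℝ) => (tp.1 f, tp.2 f)) '' P with hPf
  set Qf : F → Set (ℝ × ℝ) :=
    fun f => (fun tp : (F → ℝ) × (F → ℝ) => (tp.1 f, tp.2 f)) '' Q with hQf
  constructor
  · intro h x y
    constructor
    · intro hm
      refine D.toFilter.mem_of_superset (Filter.inter_mem h hm) ?_
      intro f hf
      simp only [Set.mem_setOf_eq] at *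
      exact hf.1 ▸ hf.2
    · intro hm
      refine D.toFilter.mem_of_superset (Filter.inter_mem h hm) ?_
      intro f hf
      simp only [Set.mem_setOf_eq] at *
      exact hf.1 ▸ hf.2
  · intro h
    by_contra hA
    have hAc : {f | Pf f = Qf f}ᶜ ∈ D := Ultrafilter.compl_mem_iff_notMem.mpr hA
    have hsub : {f | Pf f = Qf f}ᶜ ⊆
        {f | ¬ Pf f ⊆ Qf f} ∪ {f | ¬ Qf f ⊆ Pf f} := by
      intro f hf
      by_contra hcon
      simp only [Set.mem_union, Set.mem_setOf_eq, not_or, not_not] at hcon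
      exact hf (Set.Subset.antisymm hcon.1 hcon.2)
    have hU : {f | ¬ Pf f ⊆ Qf f} ∪ {f | ¬ Qf f ⊆ Pf f} ∈ D :=
      D.toFilter.mem_of_superset hAc hsub
    rcases Ultrafilter.union_mem_iff.mp hU with hB | hB
    · -- there is a point in Pf \ Qf on a D-set
      have hex : ∀ f, ∃ p : ℝ × ℝ, ¬ Pf f ⊆ Qf f → (p ∈ Pf f ∧ p ∉ Qf f) := by
        intro f
        by_cases hc : ¬ Pf f ⊆ Qf f
        · rw [Set.not_subset] at hc
          obtain ⟨p, hp1, hp2⟩ := hc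
          exact ⟨p, fun _ => ⟨hp1, hp2⟩⟩
        · exact ⟨(0, 0), fun h' => absurd h' hc⟩
      choose g hg using hex
      set x : F → ℝ := fun f => (g f).1
      set y : F → ℝ := fun f => (g f).2
      have hxy : ∀ f, (x f, y f) = g f := fun f => rfl
      have hPmem : {f | (x f, y f) ∈ Pf f} ∈ D := by
        refine D.toFilter.mem_of_superset hB ?_
        intro f hf
        simpa [hxy f] using (hg f hf).1
      have hQmem : {f | (x f, y f) ∈ Qf f} ∈ D := (h x y).mp hPmem
      obtain ⟨f, hf1, hf2⟩ := Filter.nonempty_of_mem (Filter.inter_mem hB hQmem)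
      exact (hg f hf1).2 (by simpa [hxy f] using hf2)
    · have hex : ∀ f, ∃ p : ℝ × ℝ, ¬ Qf f ⊆ Pf f → (p ∈ Qf f ∧ p ∉ Pf f) := by
        intro f
        by_cases hc : ¬ Qf f ⊆ Pf f
        · rw [Set.not_subset] at hc
          obtain ⟨p, hp1, hp2⟩ := hc
          exact ⟨p, fun _ => ⟨hp1, hp2⟩⟩
        · exact ⟨(0, 0), fun h' => absurd h' hc⟩
      choose g hg using hex
      set x : F → ℝ := fun f => (g f).1
      set y : F → ℝ := fun f => (g f).2
      have hxy : ∀ f, (x f, y f) = g f := fun f => rfl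
      have hQmem : {f | (x f, y f) ∈ Qf f} ∈ D := by
        refine D.toFilter.mem_of_superset hB ?_
        intro f hf
        simpa [hxy f] using (hg f hf).1
      have hPmem : {f | (x f, y f) ∈ Pf f} ∈ D := (h x y).mpr hQmem
      obtain ⟨f, hf1, hf2⟩ := Filter.nonempty_of_mem (Filter.inter_mem hB hPmem)
      exact (hg f hf1).2 (by simpa [hxy f] using hf2)
end
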